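/- Define 𝔍_1 = {(j_{11},...,j_{rn_r}) : j_{11} = 1, j_{ik} ≠ i for all (i,k) ≠ (1,1), and #{(h,k): j_{hk} = i} = n_i for all i}. Then #𝔍_1 ≤ n_1 · #𝔍_0, where 𝔍_0 = {(j_{11},...,j_{rn_r}) : j_{ik} ≠ i for all (i,k), and #{(h,k): j_{hk} = i} = n_i for all i}. -/

import Mathlib

/-!
Positions `p` carry a colour `c p` (for the theorem, `p = (i, k)` has colour `i`). Take `j ∈ 𝔍₁`.
Some position `q` of another colour has `j q ≠ c p₀`: otherwise the value `c p₀` would be taken at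
`p₀` and at all `∑_{k ≠ i₀} n_k ≥ n_{i₀}` positions of other colours. Exchanging the entries of `j`
at `p₀` and `q` gives an element `a` of `𝔍₀`, and `j = a ∘ swap p₀ q` with `a q = c p₀`, so each
`a ∈ 𝔍₀` arises from at most `n_{i₀}` elements of `𝔍₁`.
-/

open Finset

section AvoidingMaps

variable {α β : Type*} [Fintype α] [DecidableEq α] [DecidableEq β]

omit [DecidableEq α] in
lemma card_filter_comp_equiv (j : α → β) (e : α ≃ α) (b : β) :
    #{p | j (e p) = b} = #{p | j p = b} := by
  conv_rhs => rw [← map_univ_equiv e, filter_map, card_map]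
  rfl

variable [Fintype β] (c : α → β) (m : β → ℕ)

def avoidingMaps : Finset (α → β) :=
  {j | (∀ p, j p ≠ c p) ∧ ∀ b, #{p | j p = b} = m b}

def avoidingMapsExcept (p₀ : α) : Finset (α → β) :=
  {j | j p₀ = c p₀ ∧ (∀ p, p ≠ p₀ → j p ≠ c p) ∧ ∀ b, #{p | j p = b} = m b}

variable {c m}

lemma exists_ne_of_mem_avoidingMapsExcept {p₀ : α} {j : α → β}
    (hj : j ∈ avoidingMapsExcept c m p₀) (hm : m (c p₀) ≤ #{p | c p ≠ c p₀}) :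
    ∃ q, c q ≠ c p₀ ∧ j q ≠ c p₀ := by
  simp only [avoidingMapsExcept, mem_filter, mem_univ, true_and] at hj
  obtain ⟨hj₀, -, hfib⟩ := hj
  by_contra! h
  have hsub : insert p₀ ({p | c p ≠ c p₀} : Finset α) ⊆ ({p | j p = c p₀} : Finset α) := by
    intro p hp
    rcases mem_insert.mp hp with rfl | hp
    · simpa using hj₀
    · simpa using h p (mem_filter.mp hp).2
  have := card_le_card hsub
  rw [card_insert_of_notMem (by simp), hfib] at this
  omega

lemma comp_swap_mem_avoidingMaps {p₀ q : α} {j : α → β}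
    (hj : j ∈ avoidingMapsExcept c m p₀) (hcq : c q ≠ c p₀) (hjq : j q ≠ c p₀) :
    j ∘ Equiv.swap p₀ q ∈ avoidingMaps c m := by
  simp only [avoidingMapsExcept, mem_filter, mem_univ, true_and] at hj
  obtain ⟨hj₀, hjne, hfib⟩ := hj
  simp only [avoidingMaps, mem_filter, mem_univ, true_and, Function.comp_apply,
    card_filter_comp_equiv, hfib, implies_true, and_true]
  intro p
  rcases eq_or_ne p p₀ with rfl | hp₀
  · simpa using hjq
  rcases eq_or_ne p q with rfl | hq
  · simpa [hj₀] using hcq.symm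
  · rw [Equiv.swap_apply_of_ne_of_ne hp₀ hq]
    exact hjne p hp₀

theorem card_avoidingMapsExcept_le (p₀ : α) (hm : m (c p₀) ≤ #{p | c p ≠ c p₀}) :
    #(avoidingMapsExcept c m p₀) ≤ m (c p₀) * #(avoidingMaps c m) := by
  classical
  let R : (α → β) → (α → β) → Prop := fun j a => ∃ q, a = j ∘ Equiv.swap p₀ q
  have above : ∀ j ∈ avoidingMapsExcept c m p₀, 1 ≤ #((avoidingMaps c m).bipartiteAbove R j) := by
    intro j hj
    obtain ⟨q, hcq, hjq⟩ := exists_ne_of_mem_avoidingMapsExcept hj hm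
    exact card_pos.2 ⟨_, mem_filter.2 ⟨comp_swap_mem_avoidingMaps hj hcq hjq, q, rfl⟩⟩
  have below : ∀ a ∈ avoidingMaps c m,
      #((avoidingMapsExcept c m p₀).bipartiteBelow R a) ≤ m (c p₀) := by
    intro a ha
    calc #((avoidingMapsExcept c m p₀).bipartiteBelow R a)
        ≤ #(image (fun q => a ∘ Equiv.swap p₀ q) {q | a q = c p₀}) := by
          refine card_le_card fun j hj => ?_
          obtain ⟨hjA, q, rfl⟩ := mem_filter.1 hj
          refine mem_image.2 ⟨q, ?_, ?_⟩
          · simpa using (mem_filter.1 hjA).2.1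
          · ext p; simp
      _ ≤ #{q | a q = c p₀} := card_image_le
      _ = m (c p₀) := (mem_filter.1 ha).2.2 _
  simpa [mul_comm] using card_mul_le_card_mul R above below

end AvoidingMaps

lemma card_filter_sigma_fst_ne {r : ℕ} (n : Fin r → ℕ) (i₀ : Fin r) :
    #{p : (i : Fin r) × Fin (n i) | p.1 ≠ i₀} = ∑ k ∈ univ.erase i₀, n k := by
  rw [show ({p : (i : Fin r) × Fin (n i) | p.1 ≠ i₀} : Finset _)
      = (univ.erase i₀).sigma fun _ => univ by ext; simp, card_sigma]
  simp

/-- `#𝔍₁ ≤ n₁ · #𝔍₀`, where `𝔍₁` fixes the value at the distinguished position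
`(i₀, 0)` to be `i₀` and requires `j p ≠ p.1` elsewhere, and `𝔍₀` requires
`j p ≠ p.1` everywhere; both with fiber sizes `n i`. -/
theorem stmt6 (r : ℕ) (n : Fin r → ℕ) (hn : ∀ i, 0 < n i)
    (hbal : ∀ i, n i ≤ ∑ k ∈ Finset.univ.erase i, n k)
    (i0 : Fin r) :
    (Finset.univ.filter
        (fun j : ((i : Fin r) × Fin (n i)) → Fin r =>
          j ⟨i0, ⟨0, hn i0⟩⟩ = i0 ∧
          (∀ p, p ≠ ⟨i0, ⟨0, hn i0⟩⟩ → j p ≠ p.1) ∧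
          ∀ i, (Finset.univ.filter fun p => j p = i).card = n i)).card
    ≤ n i0 * (Finset.univ.filter
        (fun j : ((i : Fin r) × Fin (n i)) → Fin r =>
          (∀ p, j p ≠ p.1) ∧
          ∀ i, (Finset.univ.filter fun p => j p = i).card = n i)).card := by
  convert card_avoidingMapsExcept_le (c := Sigma.fst) (m := n) ⟨i0, ⟨0, hn i0⟩⟩
    ((hbal i0).trans_eq (card_filter_sigma_fst_ne n i0).symm) using 3 <;>
  -- the statement decides `∀ i : Fin r` by `Nat.decidableForallFin`, not `Fintype.decidableForallFintype`
  exact (filter_congr_decidable ..).symm
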